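/- For every nonnegative integer n and real r, the higher-order degenerate Euler polynomial satisfies ℰ^{(r)}_{n,λ}(x) = Σ_{l=0}^n C(r+l-1, l)·(-1/2)^l·l!·T_{2,λ}(n, l | x + l/2). -/

import Mathlib

noncomputable def T2 (lam x : ℝ) (n k : ℕ) : ℝ :=
  iteratedDeriv n (fun t : ℝ =>
    (k.factorial : ℝ)⁻¹ * (1 + lam * t) ^ (x / lam) *
      ((1 + lam * t) ^ (1 / (2 * lam)) - (1 + lam * t) ^ (-(1 / (2 * lam)))) ^ k) 0

noncomputable def dEuler (lam r x : ℝ) (n : ℕ) : ℝ :=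
  iteratedDeriv n (fun t : ℝ =>
    (2 / ((1 + lam * t) ^ (1 / lam) + 1)) ^ r * (1 + lam * t) ^ (x / lam)) 0

/-- Generalized binomial coefficient `C(r, l) = r(r-1)⋯(r-l+1)/l!`. -/
noncomputable def genChoose (r : ℝ) (l : ℕ) : ℝ :=
  (∏ i ∈ Finset.range l, (r - i)) / (l.factorial : ℝ)

open Real Filter Set Finset Topology

variable {lam : ℝ}

def Spos (lam : ℝ) : Set ℝ := {t | 0 < 1 + lam * t}

lemma isOpen_Spos (lam : ℝ) : IsOpen (Spos lam) :=
  isOpen_lt continuous_const (continuous_const.add (continuous_const.mul continuous_id))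

lemma zero_mem_Spos (lam : ℝ) : (0:ℝ) ∈ Spos lam := by simp [Spos]

lemma Spos_mem_nhds (lam : ℝ) : Spos lam ∈ 𝓝 (0:ℝ) :=
  (isOpen_Spos lam).mem_nhds (zero_mem_Spos lam)

def Sm (lam : ℝ) (f : ℝ → ℝ) : Prop := ContDiffOn ℝ (⊤ : ℕ∞) f (Spos lam)

lemma Sm.mul {f g : ℝ → ℝ} (hf : Sm lam f) (hg : Sm lam g) : Sm lam (fun t => f t * g t) :=
  ContDiffOn.mul hf hg

lemma Sm.add {f g : ℝ → ℝ} (hf : Sm lam f) (hg : Sm lam g) : Sm lam (fun t => f t + g t) :=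
  ContDiffOn.add hf hg

lemma Sm.pow {f : ℝ → ℝ} (hf : Sm lam f) (m : ℕ) : Sm lam (fun t => f t ^ m) :=
  ContDiffOn.pow hf m

lemma Sm.const (c : ℝ) : Sm lam (fun _ => c) := contDiffOn_const

lemma Sm.deriv' {f : ℝ → ℝ} (hf : Sm lam f) : Sm lam (deriv f) :=
  ContDiffOn.deriv_of_isOpen hf (isOpen_Spos lam) (mod_cast le_top)

lemma Sm.diffAt {f : ℝ → ℝ} (hf : Sm lam f) {t : ℝ} (ht : t ∈ Spos lam) :
    DifferentiableAt ℝ f t :=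
  (hf.differentiableOn (by simp)).differentiableAt
    ((isOpen_Spos lam).mem_nhds ht)

lemma Sm.rpow (c : ℝ) : Sm lam (fun t => (1 + lam * t) ^ c) := by
  intro t ht
  have hb : (1 + lam * t) ≠ 0 := ne_of_gt ht
  exact ((Real.contDiffAt_rpow_const_of_ne (p := c) hb).comp t
    ((contDiff_const.add (contDiff_const.mul contDiff_id)).contDiffAt)).contDiffWithinAt

/-- additivity of iterated derivative at 0 for functions smooth near 0. -/
lemma iter_zerofun (n : ℕ) : iteratedDeriv n (fun _ : ℝ => (0:ℝ)) 0 = 0 := by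
  induction n with
  | zero => simp
  | succ n ih =>
    rw [iteratedDeriv_succ']
    have : deriv (fun _ : ℝ => (0:ℝ)) = fun _ : ℝ => (0:ℝ) := by
      funext t; exact deriv_const t 0
    rw [this]; exact ih

lemma iter_add : ∀ (n : ℕ) (f g : ℝ → ℝ), Sm lam f → Sm lam g →
    iteratedDeriv n (fun t => f t + g t) 0 = iteratedDeriv n f 0 + iteratedDeriv n g 0 := by
  intro n
  induction n with
  | zero => intro f g _ _; simp
  | succ n ih =>
    intro f g hf hg
    rw [iteratedDeriv_succ', iteratedDeriv_succ', iteratedDeriv_succ']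
    have he : deriv (fun t => f t + g t) =ᶠ[𝓝 (0:ℝ)] fun t => deriv f t + deriv g t := by
      filter_upwards [Spos_mem_nhds lam] with t ht
      exact deriv_add (hf.diffAt ht) (hg.diffAt ht)
    rw [he.iteratedDeriv_eq]
    exact ih _ _ hf.deriv' hg.deriv'

lemma iter_cmul : ∀ (n : ℕ) (c : ℝ) (f : ℝ → ℝ), Sm lam f →
    iteratedDeriv n (fun t => c * f t) 0 = c * iteratedDeriv n f 0 := by
  intro n
  induction n with
  | zero => intro c f _; simp
  | succ n ih =>
    intro c f hf
    rw [iteratedDeriv_succ', iteratedDeriv_succ']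
    have he : deriv (fun t => c * f t) =ᶠ[𝓝 (0:ℝ)] fun t => c * deriv f t := by
      filter_upwards [Spos_mem_nhds lam] with t ht
      exact deriv_const_mul c (hf.diffAt ht)
    rw [he.iteratedDeriv_eq]
    exact ih c _ hf.deriv'

lemma iter_sum (n : ℕ) (s : Finset ℕ) (f : ℕ → ℝ → ℝ) (hf : ∀ i ∈ s, Sm lam (f i)) :
    iteratedDeriv n (fun t => ∑ i ∈ s, f i t) 0 = ∑ i ∈ s, iteratedDeriv n (f i) 0 := by
  induction s using Finset.cons_induction with
  | empty => simpa using iter_zerofun n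
  | cons a s ha ih =>
    rw [Finset.sum_cons]
    have h1 : Sm lam (fun t => ∑ i ∈ s, f i t) :=
      ContDiffOn.sum (fun i hi => hf i (Finset.mem_cons_of_mem hi))
    have := iter_add (lam := lam) n (f a) (fun t => ∑ i ∈ s, f i t)
      (hf a (Finset.mem_cons_self a s)) h1
    simp only [Finset.sum_cons]
    rw [this, ih (fun i hi => hf i (Finset.mem_cons_of_mem hi))]

/-- vanishing of iterated derivatives of `f^m * g` with `f 0 = 0`, `n < m`. -/
lemma iter_vanish : ∀ (n : ℕ) (m : ℕ) (f g : ℝ → ℝ), Sm lam f → Sm lam g → f 0 = 0 → n < m →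
    iteratedDeriv n (fun t => f t ^ m * g t) 0 = 0 := by
  intro n
  induction n with
  | zero =>
    intro m f g _ _ hf0 hm
    have : m ≠ 0 := by omega
    simp [iteratedDeriv_zero, hf0, zero_pow this]
  | succ n ih =>
    intro m f g hf hg hf0 hm
    obtain ⟨k, rfl⟩ : ∃ k, m = k + 1 := ⟨m - 1, by omega⟩
    rw [iteratedDeriv_succ']
    have he : deriv (fun t => f t ^ (k+1) * g t) =ᶠ[𝓝 (0:ℝ)]
        fun t => f t ^ k * (((k:ℝ)+1) * deriv f t * g t + f t * deriv g t) := by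
      filter_upwards [Spos_mem_nhds lam] with t ht
      have hdf := hf.diffAt ht
      have hdg := hg.diffAt ht
      have h1 : HasDerivAt (fun t => f t ^ (k+1) * g t)
          (((k+1 : ℕ) : ℝ) * f t ^ ((k+1) - 1) * deriv f t * g t + f t ^ (k+1) * deriv g t) t :=
        ((hdf.hasDerivAt.pow (k+1)).mul hdg.hasDerivAt)
      rw [h1.deriv]
      simp only [Nat.add_sub_cancel, pow_succ, Nat.cast_add, Nat.cast_one]
      ring
    rw [he.iteratedDeriv_eq]
    exact ih k f _ hf
      ((((Sm.const (lam := lam) ((k:ℝ)+1)).mul hf.deriv').mul hg).add (hf.mul hg.deriv'))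
      hf0 (by omega)

noncomputable def Ff (lam : ℝ) (t : ℝ) : ℝ := ((1 + lam * t) ^ (1/lam) - 1) / 2

noncomputable def fd (lam : ℝ) (t : ℝ) : ℝ := (1/lam) * (1 + lam * t) ^ (1/lam - 1) * lam / 2

lemma Ff_zero : Ff lam 0 = 0 := by simp [Ff]

lemma Sm.F : Sm lam (Ff lam) :=
  ((Sm.rpow (1/lam)).sub contDiffOn_const).div_const 2

lemma Sm.fd' : Sm lam (fd lam) :=
  ((contDiffOn_const.mul (Sm.rpow (1/lam - 1))).mul contDiffOn_const).div_const 2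

lemma hasDerivAt_base {t : ℝ} : HasDerivAt (fun t : ℝ => 1 + lam * t) lam t := by
  simpa using ((hasDerivAt_id t).const_mul lam).const_add 1

lemma hasDerivAt_F {t : ℝ} (ht : t ∈ Spos lam) : HasDerivAt (Ff lam) (fd lam t) t := by
  have hb : (1 + lam * t) ≠ 0 := ne_of_gt ht
  have houter : HasDerivAt (fun y : ℝ => y ^ (1/lam))
      ((1/lam) * (1 + lam * t) ^ (1/lam - 1)) (1 + lam * t) :=
    Real.hasDerivAt_rpow_const (Or.inl hb)
  have := (houter.comp t hasDerivAt_base).sub_const 1 |>.div_const 2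
  unfold Ff fd
  simpa [Function.comp_def] using this

lemma oneF_pos {t : ℝ} (ht : t ∈ Spos lam) : 0 < 1 + Ff lam t := by
  have : (0:ℝ) < (1 + lam * t) ^ (1/lam) := Real.rpow_pos_of_pos ht _
  unfold Ff; nlinarith

lemma Sm.oneF_rpow (c : ℝ) : Sm lam (fun t => (1 + Ff lam t) ^ c) := by
  intro t ht
  exact (Real.contDiffAt_rpow_const_of_ne (p := c) (ne_of_gt (oneF_pos ht))).comp_contDiffWithinAt
    t (contDiffWithinAt_const.add (Sm.F t ht))

lemma hasDerivAt_oneF_rpow {t : ℝ} (ht : t ∈ Spos lam) (c : ℝ) :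
    HasDerivAt (fun t => (1 + Ff lam t) ^ c) (c * (1 + Ff lam t) ^ (c - 1) * fd lam t) t := by
  have houter : HasDerivAt (fun y : ℝ => y ^ c)
      (c * (1 + Ff lam t) ^ (c - 1)) (1 + Ff lam t) :=
    Real.hasDerivAt_rpow_const (Or.inl (ne_of_gt (oneF_pos ht)))
  have := houter.comp t ((hasDerivAt_F ht).const_add 1)
  simpa [Function.comp_def, mul_assoc] using this

/-- The key remainder function. -/
noncomputable def Rn (lam r : ℝ) (n : ℕ) (t : ℝ) : ℝ :=
  (1 + Ff lam t) ^ (-r) - ∑ l ∈ Finset.range (n+1), genChoose (-r) l * Ff lam t ^ l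

lemma Sm.Rn' (r : ℝ) (n : ℕ) : Sm lam (Rn lam r n) :=
  (Sm.oneF_rpow (-r)).sub
    (ContDiffOn.sum (fun l _ => contDiffOn_const.mul (Sm.F.pow l)))

lemma genChoose_zero (a : ℝ) : genChoose a 0 = 1 := by simp [genChoose]

lemma genChoose_succ_mul (a : ℝ) (l : ℕ) :
    ((l:ℝ)+1) * genChoose a (l+1) = a * genChoose (a-1) l := by
  unfold genChoose
  rw [Finset.prod_range_succ']
  have h1 : ∀ i ∈ Finset.range l, a - ((i:ℝ)+1) = (a - 1) - i := by intro i _; push_cast; ring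
  have h2 : (∏ i ∈ Finset.range l, (a - ((i:ℕ)+1:ℕ))) = ∏ i ∈ Finset.range l, ((a-1) - i) := by
    refine Finset.prod_congr rfl fun i hi => ?_
    push_cast; ring
  rw [h2]
  rw [Nat.factorial_succ]
  have hl : ((l:ℝ)+1) ≠ 0 := by positivity
  have hf : ((l.factorial : ℝ)) ≠ 0 := Nat.cast_ne_zero.mpr l.factorial_ne_zero
  field_simp
  push_cast
  ring

lemma Rn_zero_eval (r : ℝ) (n : ℕ) : Rn lam r n 0 = 0 := by
  unfold Rn
  rw [Ff_zero]
  rw [Finset.sum_eq_single 0]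
  · simp [genChoose_zero]
  · intro l _ hl
    simp [zero_pow hl]
  · intro h; simp at h

lemma keyB : ∀ (n : ℕ) (r : ℝ) (g : ℝ → ℝ), Sm lam g →
    iteratedDeriv n (fun t => g t * Rn lam r n t) 0 = 0 := by
  intro n
  induction n with
  | zero => intro r g _; simp [iteratedDeriv_zero, Rn_zero_eval]
  | succ n ih =>
    intro r g hg
    rw [iteratedDeriv_succ']
    have he : deriv (fun t => g t * Rn lam r (n+1) t) =ᶠ[𝓝 (0:ℝ)]
        fun t => deriv g t * Rn lam r n t +
          (Ff lam t ^ (n+1) * (-(genChoose (-r) (n+1)) * deriv g t) +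
            ((-r) * (g t * fd lam t)) * Rn lam (r+1) n t) := by
      filter_upwards [Spos_mem_nhds lam] with t ht
      -- derivative of Rn r (n+1)
      have hF := hasDerivAt_F (lam := lam) ht
      have hsum : HasDerivAt (fun t => ∑ l ∈ Finset.range (n+2), genChoose (-r) l * Ff lam t ^ l)
          (∑ l ∈ Finset.range (n+2), genChoose (-r) l * ((l:ℝ) * Ff lam t ^ (l-1) * fd lam t)) t := by
        refine HasDerivAt.fun_sum fun l _ => ?_
        exact (hF.pow l).const_mul _
      have hQ : HasDerivAt (Rn lam r (n+1))
          ((-r) * (1 + Ff lam t) ^ (-r - 1) * fd lam t -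
            ∑ l ∈ Finset.range (n+2), genChoose (-r) l * ((l:ℝ) * Ff lam t ^ (l-1) * fd lam t)) t := by
        exact (hasDerivAt_oneF_rpow ht (-r)).sub hsum
      have hprod := ((hg.diffAt ht).hasDerivAt.fun_mul hQ)
      rw [hprod.deriv]
      -- now pure algebra
      have hsum_eq : (∑ l ∈ Finset.range (n+2), genChoose (-r) l * ((l:ℝ) * Ff lam t ^ (l-1) * fd lam t))
          = fd lam t * ((-r) * ∑ l ∈ Finset.range (n+1), genChoose (-r-1) l * Ff lam t ^ l) := by
        rw [Finset.sum_range_succ']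
        simp only [Nat.cast_zero, zero_mul, mul_zero, Nat.cast_add, Nat.cast_one, add_zero]
        rw [Finset.mul_sum, Finset.mul_sum]
        refine Finset.sum_congr rfl fun l _ => ?_
        have h := genChoose_succ_mul (-r) l
        have : genChoose (-r) (l+1) * (((l:ℝ)+1) * Ff lam t ^ (l+1-1) * fd lam t)
            = (((l:ℝ)+1) * genChoose (-r) (l+1)) * Ff lam t ^ l * fd lam t := by
          simp only [Nat.add_sub_cancel]; ring
        rw [this, h]
        ring
      have hR1 : Rn lam r (n+1) t = Rn lam r n t - genChoose (-r) (n+1) * Ff lam t ^ (n+1) := by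
        unfold Rn
        rw [Finset.sum_range_succ]
        ring
      have hexp : (-r : ℝ) - 1 = -(r+1) := by ring
      have hgc : (-r : ℝ) - 1 = -(r+1) := by ring
      unfold Rn
      rw [hsum_eq]
      rw [show n+1+1 = (n+1)+1 from rfl, Finset.sum_range_succ]
      rw [hexp]
      ring
    rw [he.iteratedDeriv_eq]
    have h1 : Sm lam (fun t => deriv g t * Rn lam r n t) := hg.deriv'.mul (Sm.Rn' r n)
    have h2 : Sm lam (fun t => Ff lam t ^ (n+1) * (-(genChoose (-r) (n+1)) * deriv g t)) :=
      (Sm.F.pow (n+1)).mul (contDiffOn_const.mul hg.deriv')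
    have h3 : Sm lam (fun t => ((-r) * (g t * fd lam t)) * Rn lam (r+1) n t) :=
      (contDiffOn_const.mul (hg.mul Sm.fd')).mul (Sm.Rn' (r+1) n)
    rw [iter_add n _ _ h1 (h2.add h3), iter_add n _ _ h2 h3]
    rw [ih r _ hg.deriv', ih (r+1) _ (contDiffOn_const.mul (hg.mul Sm.fd'))]
    rw [iter_vanish n (n+1) (Ff lam) _ Sm.F (contDiffOn_const.mul hg.deriv') Ff_zero (by omega)]
    ring

lemma gc_reflect (r : ℝ) (l : ℕ) : genChoose (r + l - 1) l * (-1:ℝ)^l = genChoose (-r) l := by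
  unfold genChoose
  rw [div_mul_eq_mul_div]
  congr 1
  have h1 : (∏ i ∈ Finset.range l, (r + (l:ℝ) - 1 - i)) * (-1:ℝ)^l
      = ∏ i ∈ Finset.range l, (-(r + (l:ℝ) - 1 - i)) := by
    rw [show ∀ s : Finset ℕ, (∏ i ∈ s, (-(r + (l:ℝ) - 1 - i))) = ∏ i ∈ s, ((-1) * (r + (l:ℝ) - 1 - i))
      from fun s => Finset.prod_congr rfl fun i _ => by ring]
    rw [Finset.prod_mul_distrib, Finset.prod_const, Finset.card_range]
    ring
  rw [h1]
  have h2 : ∀ i ∈ Finset.range l, (-(r + (l:ℝ) - 1 - i)) = (fun j : ℕ => -r - (j:ℝ)) (l - 1 - i) := by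
    intro i hi
    have hil := Finset.mem_range.mp hi
    simp only
    rw [Nat.cast_sub (by omega : i ≤ l - 1), Nat.cast_sub (by omega : 1 ≤ l)]
    push_cast
    ring
  rw [Finset.prod_congr rfl h2, Finset.prod_range_reflect (fun j : ℕ => -r - (j:ℝ)) l]

lemma ptwise_lhs (hlam : lam ≠ 0) (r x : ℝ) {t : ℝ} (ht : t ∈ Spos lam) :
    (2 / ((1 + lam * t) ^ (1 / lam) + 1)) ^ r * (1 + lam * t) ^ (x / lam)
      = (1 + lam * t) ^ (x / lam) * (1 + Ff lam t) ^ (-r) := by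
  have hu : (0:ℝ) < (1 + lam * t) ^ (1 / lam) := Real.rpow_pos_of_pos ht _
  set u := (1 + lam * t) ^ (1 / lam) with hudef
  have h1 : 1 + Ff lam t = (u + 1) / 2 := by unfold Ff; ring
  have h2 : (2 : ℝ) / (u + 1) = ((u + 1) / 2)⁻¹ := by rw [inv_div]
  have h3 : (0:ℝ) < (u + 1) / 2 := by positivity
  rw [h1, h2, Real.inv_rpow h3.le, ← Real.rpow_neg h3.le, mul_comm]

lemma ptwise_t2 (hlam : lam ≠ 0) (x : ℝ) (l : ℕ) {t : ℝ} (ht : t ∈ Spos lam) :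
    (1 + lam * t) ^ ((x + (l:ℝ)/2) / lam) *
      ((1 + lam * t) ^ (1 / (2 * lam)) - (1 + lam * t) ^ (-(1 / (2 * lam)))) ^ l
      = (1 + lam * t) ^ (x / lam) * (2 * Ff lam t) ^ l := by
  have hb : (0:ℝ) < 1 + lam * t := ht
  have hkey : (1 + lam * t) ^ (1 / (2 * lam)) *
      ((1 + lam * t) ^ (1 / (2 * lam)) - (1 + lam * t) ^ (-(1 / (2 * lam))))
      = 2 * Ff lam t := by
    rw [mul_sub, ← Real.rpow_add hb, ← Real.rpow_add hb]
    rw [show 1 / (2 * lam) + 1 / (2 * lam) = 1 / lam by field_simp [hlam]; norm_num]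
    rw [show 1 / (2 * lam) + -(1 / (2 * lam)) = 0 by ring, Real.rpow_zero]
    unfold Ff; ring
  have hsplit : (1 + lam * t) ^ ((x + (l:ℝ)/2) / lam)
      = (1 + lam * t) ^ (x / lam) * ((1 + lam * t) ^ (1 / (2 * lam))) ^ l := by
    rw [show (x + (l:ℝ)/2) / lam = x / lam + (1 / (2 * lam)) * l by field_simp [hlam]]
    rw [Real.rpow_add hb, Real.rpow_mul hb.le, Real.rpow_natCast]
  rw [hsplit, mul_assoc, ← mul_pow, hkey]

lemma Sm.t2int (x : ℝ) (l : ℕ) : Sm lam (fun t : ℝ =>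
    ((l.factorial : ℝ))⁻¹ * (1 + lam * t) ^ (x / lam) *
      ((1 + lam * t) ^ (1 / (2 * lam)) - (1 + lam * t) ^ (-(1 / (2 * lam)))) ^ l) :=
  (contDiffOn_const.mul (Sm.rpow _)).mul (((Sm.rpow _).sub (Sm.rpow _)).pow l)

theorem degenerate_euler_via_T2 (lam r x : ℝ) (hlam : lam ≠ 0) (n : ℕ) :
    dEuler lam r x n
      = ∑ l ∈ Finset.range (n + 1),
          genChoose (r + l - 1) l * (-(1 / 2)) ^ l * (l.factorial : ℝ) *
            T2 lam (x + (l : ℝ) / 2) n l := by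
  unfold dEuler
  set w : ℝ → ℝ := fun t => (1 + lam * t) ^ (x / lam) with hw
  have hSmw : Sm lam w := Sm.rpow _
  have hE : (fun t : ℝ => (2 / ((1 + lam * t) ^ (1 / lam) + 1)) ^ r * (1 + lam * t) ^ (x / lam))
      =ᶠ[𝓝 (0:ℝ)] fun t => (w t * Rn lam r n t) +
        (∑ l ∈ Finset.range (n+1), genChoose (-r) l * (w t * Ff lam t ^ l)) := by
    filter_upwards [Spos_mem_nhds lam] with t ht
    rw [ptwise_lhs hlam r x ht]
    unfold Rn
    have hms : ∑ l ∈ Finset.range (n+1), genChoose (-r) l * (w t * Ff lam t ^ l)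
        = w t * ∑ l ∈ Finset.range (n+1), genChoose (-r) l * Ff lam t ^ l := by
      rw [Finset.mul_sum]
      exact Finset.sum_congr rfl fun l _ => by ring
    rw [hms]
    ring
  rw [hE.iteratedDeriv_eq]
  have h1 : Sm lam (fun t => w t * Rn lam r n t) := hSmw.mul (Sm.Rn' r n)
  have h2 : Sm lam (fun t => ∑ l ∈ Finset.range (n+1), genChoose (-r) l * (w t * Ff lam t ^ l)) :=
    ContDiffOn.sum fun l _ => contDiffOn_const.mul (hSmw.mul (Sm.F.pow l))
  rw [iter_add n _ _ h1 h2, keyB n r w hSmw, zero_add]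
  rw [iter_sum n _ _ (fun l _ => contDiffOn_const.mul (hSmw.mul (Sm.F.pow l)))]
  refine Finset.sum_congr rfl fun l _ => ?_
  -- RHS summand
  unfold T2
  set C : ℝ := genChoose (r + l - 1) l * (-(1 / 2)) ^ l * (l.factorial : ℝ) with hC
  have hSmT : Sm lam (fun t : ℝ =>
      ((l.factorial : ℝ))⁻¹ * (1 + lam * t) ^ ((x + (l:ℝ)/2) / lam) *
        ((1 + lam * t) ^ (1 / (2 * lam)) - (1 + lam * t) ^ (-(1 / (2 * lam)))) ^ l) :=
    Sm.t2int _ l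
  rw [← iter_cmul n C _ hSmT]
  have hT : (fun t : ℝ => C * (((l.factorial : ℝ))⁻¹ * (1 + lam * t) ^ ((x + (l:ℝ)/2) / lam) *
        ((1 + lam * t) ^ (1 / (2 * lam)) - (1 + lam * t) ^ (-(1 / (2 * lam)))) ^ l))
      =ᶠ[𝓝 (0:ℝ)] fun t => genChoose (-r) l * (w t * Ff lam t ^ l) := by
    filter_upwards [Spos_mem_nhds lam] with t ht
    have hfac : ((l.factorial : ℝ)) ≠ 0 := Nat.cast_ne_zero.mpr l.factorial_ne_zero
    have h2 := ptwise_t2 hlam x l ht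
    calc C * (((l.factorial : ℝ))⁻¹ * (1 + lam * t) ^ ((x + (l:ℝ)/2) / lam) *
          ((1 + lam * t) ^ (1 / (2 * lam)) - (1 + lam * t) ^ (-(1 / (2 * lam)))) ^ l)
        = C * ((l.factorial : ℝ))⁻¹ * ((1 + lam * t) ^ ((x + (l:ℝ)/2) / lam) *
          ((1 + lam * t) ^ (1 / (2 * lam)) - (1 + lam * t) ^ (-(1 / (2 * lam)))) ^ l) := by ring
      _ = C * ((l.factorial : ℝ))⁻¹ * ((1 + lam * t) ^ (x / lam) * (2 * Ff lam t) ^ l) := by rw [h2]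
      _ = genChoose (r + l - 1) l * ((-(1 / 2)) ^ l * 2 ^ l) *
            ((l.factorial : ℝ) * ((l.factorial : ℝ))⁻¹) * (w t * Ff lam t ^ l) := by
          rw [hC, hw, mul_pow (2:ℝ) (Ff lam t) l]; ring
      _ = genChoose (-r) l * (w t * Ff lam t ^ l) := by
          rw [mul_inv_cancel₀ hfac, ← mul_pow,
            show (-(1/2):ℝ) * 2 = -1 by norm_num, gc_reflect, mul_one]
  rw [hT.iteratedDeriv_eq]
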